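/- Let X₁, …, X_n ∈ ℝ^d, y₁, …, y_n ∈ ℝ, and evaluation points x₁, …, x_m ∈ ℝ^d. Define F(α, β) = Σ_{j=1}^n ( y_j − α − ⟨β, X_j⟩ )² for (α, β) ∈ ℝ × ℝ^d, and let V = { (α_i, β_i)_{i=1}^m : α_i + ⟨β_i, x_i⟩ ≤ α_l + ⟨β_l, x_i⟩ for all i, l, and β_i ≥ 0 componentwise for all i }. Then inf over V of Σ_{i=1}^m F(α_i, β_i) equals m · inf { F(α, β) : β ≥ 0 componentwise }. Moreover, if F has a unique minimizer (α*, β*) over { (α, β) : β ≥ 0 } (which holds, e.g., when the vectors (1, X_j), j = 1,…,n, span ℝ^{d+1}, making F strictly convex and coercive), then every minimizer of Σ_{i=1}^m F(α_i, β_i) over V satisfies (α_i, β_i) = (α*, β*) for all i = 1,…,m. -/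

import Mathlib

/-!
Every coordinate of a feasible point of `V` is feasible for `F` alone, so
`Σᵢ F(αᵢ, βᵢ) ≥ m · inf F`; conversely the Afriat constraints hold trivially for a constant
family, so replicating any monotone `(α, β)` shows `m · inf F` is approached within `V`.
For a minimizer over `V`, comparing with the replicated minimizer `(α*, β*)` forces every
summand to attain `inf F`, hence to equal `(α*, β*)` by uniqueness.
-/

open scoped RealInnerProductSpace

/-- The linear least-squares criterion F(α, β) = Σⱼ (yⱼ − α − ⟨β, Xⱼ⟩)². -/
noncomputable def linLSCriterion {d n : ℕ} (X : Fin n → EuclideanSpace ℝ (Fin d))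
    (y : Fin n → ℝ) (p : ℝ × EuclideanSpace ℝ (Fin d)) : ℝ :=
  ∑ j, (y j - p.1 - ⟪p.2, X j⟫) ^ 2

/-- The Afriat (concavity) constraints at evaluation points x₁,…,x_m together with
componentwise monotonicity constraints. -/
def afriatMonotoneSet {d m : ℕ} (xs : Fin m → EuclideanSpace ℝ (Fin d)) :
    Set (Fin m → ℝ × EuclideanSpace ℝ (Fin d)) :=
  {c | (∀ i l, (c i).1 + ⟪(c i).2, xs i⟫ ≤ (c l).1 + ⟪(c l).2, xs i⟫) ∧
    ∀ i k, 0 ≤ (c i).2 k}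

section SeparableSum

variable {α ι : Type*} [Fintype ι] {F : α → ℝ} {S : Set α} {V : Set (ι → α)}

theorem card_mul_iInf_le_sum (hF : BddBelow (F '' S)) {c : ι → α} (hc : ∀ i, c i ∈ S) :
    Fintype.card ι * ⨅ p : S, F p ≤ ∑ i, F (c i) := by
  rw [Set.image_eq_range] at hF
  calc (Fintype.card ι : ℝ) * ⨅ p : S, F p = ∑ _i : ι, ⨅ p : S, F p := by simp
    _ ≤ ∑ i, F (c i) := Finset.sum_le_sum fun i _ => ciInf_le hF ⟨c i, hc i⟩

theorem iInf_sum_eq_card_mul_iInf (hF : BddBelow (F '' S)) (hS : S.Nonempty)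
    (hVS : ∀ c ∈ V, ∀ i, c i ∈ S) (hconst : ∀ p ∈ S, (fun _ => p) ∈ V) :
    ⨅ c : V, ∑ i, F (c.1 i) = Fintype.card ι * ⨅ p : S, F p := by
  have : Nonempty S := hS.to_subtype
  have : Nonempty V := ⟨⟨_, hconst _ hS.some_mem⟩⟩
  have hV : BddBelow (Set.range fun c : V => ∑ i, F (c.1 i)) :=
    ⟨_, Set.forall_mem_range.2 fun c => card_mul_iInf_le_sum hF (hVS c.1 c.2)⟩
  refine le_antisymm ?_ (le_ciInf fun c => card_mul_iInf_le_sum hF (hVS c.1 c.2))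
  rw [Real.mul_iInf_of_nonneg (Nat.cast_nonneg _)]
  exact le_ciInf fun p => (ciInf_le hV ⟨_, hconst p.1 p.2⟩).trans_eq (by simp)

theorem isMinOn_apply_of_isMinOn_sum {pstar : α} (hmin : IsMinOn F S pstar)
    (hVS : ∀ c ∈ V, ∀ i, c i ∈ S) (hconst : (fun _ => pstar) ∈ V) {c : ι → α} (hc : c ∈ V)
    (hcmin : IsMinOn (fun c : ι → α => ∑ i, F (c i)) V c) (i : ι) : IsMinOn F S (c i) := by
  have hle : ∀ j, F pstar ≤ F (c j) := fun j => isMinOn_iff.1 hmin _ (hVS c hc j)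
  have hsum : ∑ j, F pstar = ∑ j, F (c j) :=
    le_antisymm (Finset.sum_le_sum fun j _ => hle j) (isMinOn_iff.1 hcmin _ hconst)
  have heq := (Finset.sum_eq_sum_iff_of_le fun j _ => hle j).1 hsum i (Finset.mem_univ i)
  exact isMinOn_iff.2 fun x hx => heq ▸ isMinOn_iff.1 hmin x hx

end SeparableSum

theorem linLSCriterion_nonneg {d n : ℕ} (X : Fin n → EuclideanSpace ℝ (Fin d)) (y : Fin n → ℝ)
    (p : ℝ × EuclideanSpace ℝ (Fin d)) : 0 ≤ linLSCriterion X y p :=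
  Finset.sum_nonneg fun _ _ => sq_nonneg _

theorem const_mem_afriatMonotoneSet {d m : ℕ} (xs : Fin m → EuclideanSpace ℝ (Fin d))
    {p : ℝ × EuclideanSpace ℝ (Fin d)} (hp : ∀ k, 0 ≤ p.2 k) :
    (fun _ => p) ∈ afriatMonotoneSet xs :=
  ⟨fun _ _ => le_rfl, fun _ => hp⟩

theorem sckls_infinite_bandwidth_collapse_general
    {d n m : ℕ} (X : Fin n → EuclideanSpace ℝ (Fin d)) (y : Fin n → ℝ)
    (xs : Fin m → EuclideanSpace ℝ (Fin d)) :
    ((⨅ c : afriatMonotoneSet xs, ∑ i, linLSCriterion X y (c.1 i)) =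
      m * ⨅ p : {p : ℝ × EuclideanSpace ℝ (Fin d) // ∀ k, 0 ≤ p.2 k},
            linLSCriterion X y p.1) ∧
    (∀ pstar : ℝ × EuclideanSpace ℝ (Fin d), (∀ k, 0 ≤ pstar.2 k) →
      (∀ p : ℝ × EuclideanSpace ℝ (Fin d), (∀ k, 0 ≤ p.2 k) →
        linLSCriterion X y pstar ≤ linLSCriterion X y p) →
      (∀ p : ℝ × EuclideanSpace ℝ (Fin d), (∀ k, 0 ≤ p.2 k) →
        (∀ p' : ℝ × EuclideanSpace ℝ (Fin d), (∀ k, 0 ≤ p'.2 k) →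
          linLSCriterion X y p ≤ linLSCriterion X y p') → p = pstar) →
      ∀ c ∈ afriatMonotoneSet xs,
        (∀ c' ∈ afriatMonotoneSet xs,
          ∑ i, linLSCriterion X y (c i) ≤ ∑ i, linLSCriterion X y (c' i)) →
        ∀ i, c i = pstar) := by
  set S : Set (ℝ × EuclideanSpace ℝ (Fin d)) := {p | ∀ k, 0 ≤ p.2 k}
  have hVS : ∀ c ∈ afriatMonotoneSet xs, ∀ i, c i ∈ S := fun _ hc i => hc.2 i
  have hF : BddBelow (linLSCriterion X y '' S) :=
    ⟨0, Set.forall_mem_image.2 fun p _ => linLSCriterion_nonneg X y p⟩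
  refine ⟨?_, fun pstar hpstar hmin huniq c hc hcmin i => ?_⟩
  · have := iInf_sum_eq_card_mul_iInf hF ⟨0, fun _ => le_rfl⟩ hVS
      fun _ hp => const_mem_afriatMonotoneSet xs hp
    rwa [Fintype.card_fin] at this
  · exact huniq _ (hc.2 i) <| isMinOn_iff.1 <|
      isMinOn_apply_of_isMinOn_sum (isMinOn_iff.2 hmin) hVS
        (const_mem_afriatMonotoneSet xs hpstar) hc (isMinOn_iff.2 hcmin) i

/-- Proposition A.2: the infimum over the Afriat-constrained set of the separable sum
Σᵢ F(αᵢ, βᵢ) equals m times the infimum of F over the monotonicity-constrained set, and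
if F has a unique minimizer over {β ≥ 0} then every constrained minimizer replicates it
at each evaluation point. -/
theorem sckls_infinite_bandwidth_collapse
    {d n m : ℕ} (X : Fin n → EuclideanSpace ℝ (Fin d)) (y : Fin n → ℝ)
    (xs : Fin m → EuclideanSpace ℝ (Fin d)) (hm : 0 < m) :
    ((⨅ c : afriatMonotoneSet xs, ∑ i, linLSCriterion X y (c.1 i)) =
      m * ⨅ p : {p : ℝ × EuclideanSpace ℝ (Fin d) // ∀ k, 0 ≤ p.2 k},
            linLSCriterion X y p.1) ∧
    (∀ pstar : ℝ × EuclideanSpace ℝ (Fin d), (∀ k, 0 ≤ pstar.2 k) →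
      (∀ p : ℝ × EuclideanSpace ℝ (Fin d), (∀ k, 0 ≤ p.2 k) →
        linLSCriterion X y pstar ≤ linLSCriterion X y p) →
      (∀ p : ℝ × EuclideanSpace ℝ (Fin d), (∀ k, 0 ≤ p.2 k) →
        (∀ p' : ℝ × EuclideanSpace ℝ (Fin d), (∀ k, 0 ≤ p'.2 k) →
          linLSCriterion X y p ≤ linLSCriterion X y p') → p = pstar) →
      ∀ c ∈ afriatMonotoneSet xs,
        (∀ c' ∈ afriatMonotoneSet xs,
          ∑ i, linLSCriterion X y (c i) ≤ ∑ i, linLSCriterion X y (c' i)) →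
        ∀ i, c i = pstar) :=
  sckls_infinite_bandwidth_collapse_general X y xs
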